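/- Let X be wep-connected and x₁, x₂ ∈ X. For each path-homotopy class [α] ∈ πX(x₁, x₂) there exists a well-targeted path β with β(0) = x₁, β(1) = x₂ and β path-homotopic to α rel endpoints. -/

import Mathlib

open unitInterval Topology

/-- A path `α` is well-targeted if every neighborhood `U` of `α` in the space of paths
starting at `α 0` admits an open neighborhood `V` of `α 1` each of whose points is the
endpoint of some path in `U`. -/
def IsWellTargeted {X : Type*} [TopologicalSpace X] (α : C(I, X)) : Prop :=
  ∀ U : Set {β : C(I, X) // β 0 = α 0}, IsOpen U →
    (⟨α, rfl⟩ : {β : C(I, X) // β 0 = α 0}) ∈ U →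
    ∃ V : Set X, IsOpen V ∧ α 1 ∈ V ∧ ∀ b ∈ V, ∃ β ∈ U, β.1 1 = b

/-- A path `α` is well-ended if every neighborhood `U` of `α` in `𝒫X` admits open
neighborhoods `V₀, V₁` of `α 0, α 1` such that every pair `(a, b) ∈ V₀ × V₁` is joined
by a path in `U`. -/
def IsWellEnded {X : Type*} [TopologicalSpace X] (α : C(I, X)) : Prop :=
  ∀ U : Set C(I, X), IsOpen U → α ∈ U →
    ∃ V₀ V₁ : Set X, IsOpen V₀ ∧ IsOpen V₁ ∧ α 0 ∈ V₀ ∧ α 1 ∈ V₁ ∧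
      ∀ a ∈ V₀, ∀ b ∈ V₁, ∃ β ∈ U, β 0 = a ∧ β 1 = b

/-- A space is wep-connected if every pair of its points is joined by a well-ended path. -/
def WepConnected (X : Type*) [TopologicalSpace X] : Prop :=
  ∀ x y : X, ∃ α : C(I, X), α 0 = x ∧ α 1 = y ∧ IsWellEnded α

/-! Fix a well-ended loop `e` at `x₂` and take `β = (α · e) · e⁻¹`, which is homotopic to `α`.
Reversing a path `δ` that ends at `x₂` and appending it to `α · e` is continuous in `δ`, so every
path near `β` arises this way from a `δ` near `e`; well-endedness of `e` lets the starting point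
`δ 0`, which is the endpoint of the glued path, range over a whole neighborhood of `e 0 = x₂`. -/

section

variable {X : Type*} [TopologicalSpace X]

theorem isWellTargeted_iff {α : C(I, X)} :
    IsWellTargeted α ↔ ∀ W : Set C(I, X), IsOpen W → α ∈ W →
      ∃ V : Set X, IsOpen V ∧ α 1 ∈ V ∧ ∀ b ∈ V, ∃ β ∈ W, β 0 = α 0 ∧ β 1 = b := by
  constructor
  · intro h W hW hαW
    obtain ⟨V, hV, hαV, hjoin⟩ := h (Subtype.val ⁻¹' W) (hW.preimage continuous_subtype_val) hαW
    refine ⟨V, hV, hαV, fun b hb => ?_⟩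
    obtain ⟨β, hβW, hβ1⟩ := hjoin b hb
    exact ⟨β.1, hβW, β.2, hβ1⟩
  · intro h U hU hαU
    obtain ⟨W, hW, rfl⟩ := isOpen_induced_iff.mp hU
    obtain ⟨V, hV, hαV, hjoin⟩ := h W hW hαU
    refine ⟨V, hV, hαV, fun b hb => ?_⟩
    obtain ⟨β, hβW, hβ0, hβ1⟩ := hjoin b hb
    exact ⟨⟨β, hβ0⟩, hβW, hβ1⟩

theorem Path.Homotopic.trans_trans_symm {x y z : X} (α : Path x y) (e : Path y z) :
    α.Homotopic ((α.trans e).trans e.symm) := by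
  have h_refl : α.Homotopic (α.trans (Path.refl y)) := ⟨(Path.Homotopy.transRefl α).symm⟩
  have h_cancel : (α.trans (Path.refl y)).Homotopic (α.trans (e.trans e.symm)) :=
    .hcomp (.refl α) ⟨Path.Homotopy.reflTransSymm e⟩
  exact (h_refl.trans h_cancel).trans ⟨(Path.Homotopy.transAssoc α e e.symm).symm⟩

def pathOfEndpoint {y : X} (δ : {δ : C(I, X) // δ 1 = y}) : Path (δ.1 0) y :=
  ⟨δ.1, rfl, δ.2⟩

theorem continuous_trans_symm_pathOfEndpoint {x y : X} (f : Path x y) :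
    Continuous fun δ : {δ : C(I, X) // δ 1 = y} =>
      ((f.trans (pathOfEndpoint δ).symm : Path x (δ.1 0)) : C(I, X)) := by
  have h_family : Continuous ↿(pathOfEndpoint (y := y)) :=
    continuous_eval.comp ((continuous_subtype_val.comp continuous_fst).prodMk continuous_snd)
  exact ContinuousMap.continuous_of_continuous_uncurry _ <|
    Path.trans_continuous_family (fun _ => f) (by fun_prop) _
      (Path.symm_continuous_family _ h_family)

theorem IsWellEnded.isWellTargeted_trans_symm {x y z : X} (f : Path x y) {e : Path z y}
    (he : IsWellEnded e.toContinuousMap) : IsWellTargeted (f.trans e.symm).toContinuousMap := by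
  refine isWellTargeted_iff.mpr fun W hW hW_mem => ?_
  obtain ⟨W₂, hW₂, hW₂_eq⟩ :=
    isOpen_induced_iff.mp (hW.preimage (continuous_trans_symm_pathOfEndpoint f))
  have he_mem : e.toContinuousMap ∈ W₂ := by
    change (⟨e.toContinuousMap, e.target⟩ : {δ : C(I, X) // δ 1 = y}) ∈ Subtype.val ⁻¹' W₂
    rw [hW₂_eq]
    exact hW_mem
  obtain ⟨V₀, V₁, hV₀, -, hz, hy, hjoin⟩ := he W₂ hW₂ he_mem
  refine ⟨V₀, hV₀, by simpa using hz, fun b hb => ?_⟩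
  obtain ⟨δ, hδW₂, hδ0, hδ1⟩ := hjoin b hb y (by simpa using hy)
  have hδW : (⟨δ, hδ1⟩ : {δ : C(I, X) // δ 1 = y}) ∈ Subtype.val ⁻¹' W₂ := hδW₂
  rw [hW₂_eq] at hδW
  exact ⟨_, hδW, by simp, by simpa [pathOfEndpoint] using hδ0⟩

end

/-- In a wep-connected space, every path-homotopy class of paths from `x₁` to `x₂`
contains a well-targeted representative. -/
theorem exists_wellTargeted_homotopic {X : Type*} [TopologicalSpace X]
    (hX : WepConnected X) (x₁ x₂ : X) (α : Path x₁ x₂) :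
    ∃ β : Path x₁ x₂, α.Homotopic β ∧ IsWellTargeted β.toContinuousMap := by
  obtain ⟨ε, hε0, hε1, hε⟩ := hX x₂ x₂
  let e : Path x₂ x₂ := ⟨ε, hε0, hε1⟩
  exact ⟨(α.trans e).trans e.symm, .trans_trans_symm α e,
    IsWellEnded.isWellTargeted_trans_symm (α.trans e) hε⟩
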